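/- arXiv:2101.10432 — 3 statements merged into one kernel-verified Lean document; each statement's English description precedes it below -/
import Mathlib

section
/- Let χ be a primitive Dirichlet character of conductor F and k ≥ 1 an integer. Then B_k(χ) = (1/F)·Σ_{1≤j≤k+1} ((−1)^{j−1}/j)·C(k+1,j)·(Σ_{0≤r<Fj} χ(r)·r^k), where χ(r) means χ(r mod F) and C(k+1,j) is the binomial coefficient. -/
open scoped Classical

/-- The generalized (`χ`-)Bernoulli numbers `B : ℕ → ℂ` of a Dirichlet character `χ`
modulo `F`, defined by the exponential generating function
`T/(e^{FT}-1) · ∑_{0 ≤ r < F} χ(r) e^{rT} = ∑_{k ≥ 0} B k · T^k/k!`. -/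
def IsBernoulliChar {F : ℕ} (χ : DirichletCharacter ℂ F) (B : ℕ → ℂ) : Prop :=
  PowerSeries.X *
      ∑ r ∈ Finset.range F, PowerSeries.C (χ (r : ZMod F)) *
        PowerSeries.rescale (r : ℂ) (PowerSeries.exp ℂ)
    = (PowerSeries.rescale (F : ℂ) (PowerSeries.exp ℂ) - 1) *
        PowerSeries.mk (fun n => B n / n.factorial)

/-!
Summing the defining identity over `N` consecutive blocks of length `F` gives
`T · ∑_{r<FN} χ(r) e^{rT} = (e^{FNT} - 1) · ∑ B_n T^n/n!`, so `∑_{r<FN} χ(r) r^k` is a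
polynomial in `N` of degree `k + 1` without constant term, whose linear coefficient is `F · B_k`.
The weights `(-1)^{j-1} C(k+1,j)/j` pick out the linear coefficient of such a polynomial, because
the `(k+1)`-st finite difference of `j ↦ j^i` vanishes for `i ≤ k`.
-/

open Finset

theorem sum_range_alternating_choose_mul_pow_eq_zero {R : Type*} [CommRing R] {m n : ℕ}
    (h : m < n) : ∑ j ∈ range (n + 1), (-1 : R) ^ j * n.choose j * (j : R) ^ m = 0 := by
  have hdiff := congr_fun (fwdDiff_iter_pow_eq_zero_of_lt (R := R) h) 0
  rw [fwdDiff_iter_eq_sum_shift, Pi.zero_apply] at hdiff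
  calc ∑ j ∈ range (n + 1), (-1 : R) ^ j * n.choose j * (j : R) ^ m
      = (-1) ^ n * ∑ j ∈ range (n + 1),
          ((-1 : ℤ) ^ (n - j) * n.choose j) • ((0 : R) + j • 1) ^ m := by
        rw [mul_sum]
        refine sum_congr rfl fun j hj => ?_
        have hsign : (-1 : R) ^ n = (-1) ^ j * (-1) ^ (n - j) := by
          rw [← pow_add, Nat.add_sub_cancel' (mem_range_succ_iff.mp hj)]
        simp only [zsmul_eq_mul, nsmul_eq_mul, mul_one, zero_add]
        push_cast
        rw [hsign]
        ring_nf
        simp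
    _ = 0 := by rw [hdiff, mul_zero]

theorem sum_Icc_alternating_choose_div_mul_pow_succ {K : Type*} [Field K] [CharZero K]
    {n i : ℕ} (hi : i < n) :
    ∑ j ∈ Icc 1 n, (-1 : K) ^ (j - 1) / j * n.choose j * (j : K) ^ (i + 1) =
      if i = 0 then 1 else 0 := by
  have hsplit := sum_range_alternating_choose_mul_pow_eq_zero (R := K) hi
  rw [range_eq_Ico, sum_eq_sum_Ico_succ_bot (by omega), Ico_add_one_right_eq_Icc] at hsplit
  simp only [pow_zero, Nat.choose_zero_right, Nat.cast_one, one_mul, Nat.cast_zero,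
    zero_add] at hsplit
  rw [← zero_pow_eq, eq_neg_of_add_eq_zero_left hsplit, ← sum_neg_distrib]
  refine sum_congr rfl fun j hj => ?_
  obtain ⟨j, rfl⟩ := Nat.exists_eq_add_one.mpr (mem_Icc.mp hj).1
  have : (j + 1 : K) ≠ 0 := Nat.cast_add_one_ne_zero j
  push_cast
  field_simp
  ring

theorem sum_Icc_alternating_choose_div_mul_sum_pow_succ {K : Type*} [Field K] [CharZero K]
    {n : ℕ} (hn : 0 < n) (c : ℕ → K) :
    ∑ j ∈ Icc 1 n, (-1 : K) ^ (j - 1) / j * n.choose j * ∑ i ∈ range n, c i * (j : K) ^ (i + 1) =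
      c 0 := by
  simp_rw [mul_sum, mul_left_comm _ (c _)]
  rw [sum_comm]
  simp_rw [← mul_sum]
  rw [sum_congr rfl fun i hi => by
    rw [sum_Icc_alternating_choose_div_mul_pow_succ (mem_range.mp hi)]]
  simp [hn]

namespace IsBernoulliChar

open PowerSeries

variable {F : ℕ} {χ : DirichletCharacter ℂ F} {B : ℕ → ℂ}

theorem X_mul_sum_range_mul (hB : IsBernoulliChar χ B) (N : ℕ) :
    X * ∑ r ∈ range (F * N), C (χ r) * rescale (r : ℂ) (exp ℂ) =
      (rescale (F * N : ℂ) (exp ℂ) - 1) * PowerSeries.mk fun n => B n / n.factorial := by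
  induction N with
  | zero => simp
  | succ N ih =>
    have hblock : ∑ s ∈ range F, C (χ ↑(F * N + s)) * rescale (↑(F * N + s) : ℂ) (exp ℂ) =
        rescale (F * N : ℂ) (exp ℂ) * ∑ s ∈ range F, C (χ s) * rescale (s : ℂ) (exp ℂ) := by
      rw [mul_sum]
      refine sum_congr rfl fun s _ => ?_
      have hχ : ((F * N + s : ℕ) : ZMod F) = s := by simp
      rw [hχ, mul_left_comm, exp_mul_exp_eq_exp_add]
      push_cast
      rfl
    have hexp : rescale (F * ↑(N + 1) : ℂ) (exp ℂ) =
        rescale (F * N : ℂ) (exp ℂ) * rescale (F : ℂ) (exp ℂ) := by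
      rw [exp_mul_exp_eq_exp_add]
      push_cast
      ring_nf
    rw [mul_add_one, sum_range_add, hblock, mul_add, ih, mul_left_comm, hB, hexp]
    ring

theorem sum_range_mul_pow (hB : IsBernoulliChar χ B) (N k : ℕ) :
    ∑ r ∈ range (F * N), χ r * (r : ℂ) ^ k =
      ∑ i ∈ range (k + 1), k.factorial * F ^ (i + 1) * B (k - i) /
        ((i + 1).factorial * (k - i).factorial) * (N : ℂ) ^ (i + 1) := by
  have h := congrArg (coeff (k + 1)) (hB.X_mul_sum_range_mul N)
  rw [coeff_succ_X_mul, coeff_mul, Nat.sum_antidiagonal_eq_sum_range_succ_mk,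
    sum_range_succ'] at h
  simp only [map_sum, coeff_C_mul, coeff_rescale, coeff_exp, map_sub, coeff_one, coeff_mk,
    map_div₀, map_one, map_natCast, Nat.add_sub_add_right, Nat.add_one_ne_zero, if_false,
    sub_zero, pow_zero, Nat.factorial_zero, Nat.cast_one, div_one, if_true, mul_one, sub_self,
    zero_mul, add_zero] at h
  have hkfac : (k.factorial : ℂ) ≠ 0 := Nat.cast_ne_zero.mpr k.factorial_ne_zero
  calc ∑ r ∈ range (F * N), χ r * (r : ℂ) ^ k
      = k.factorial * ∑ r ∈ range (F * N), χ r * ((r : ℂ) ^ k * (1 / k.factorial)) := by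
        rw [mul_sum]
        refine sum_congr rfl fun r _ => ?_
        field_simp
    _ = _ := by
        rw [h, mul_sum]
        refine sum_congr rfl fun i _ => ?_
        field_simp
        ring

end IsBernoulliChar

theorem bernoulliChar_eq_alternating_sum_general
    (F : ℕ) [NeZero F] (χ : DirichletCharacter ℂ F)
    (k : ℕ) (B : ℕ → ℂ) (hB : IsBernoulliChar χ B) :
    B k = (1 / (F : ℂ)) *
      ∑ j ∈ Finset.Icc 1 (k + 1),
        ((-1 : ℂ) ^ (j - 1) / (j : ℂ)) * ((k + 1).choose j : ℂ) *
          ∑ r ∈ Finset.range (F * j), χ (r : ZMod F) * (r : ℂ) ^ k := by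
  simp_rw [hB.sum_range_mul_pow _ k]
  rw [sum_Icc_alternating_choose_div_mul_sum_pow_succ k.succ_pos]
  have hF : (F : ℂ) ≠ 0 := NeZero.ne _
  have hkfac : (k.factorial : ℂ) ≠ 0 := Nat.cast_ne_zero.mpr k.factorial_ne_zero
  simp only [zero_add, pow_one, Nat.sub_zero, Nat.factorial_one, Nat.cast_one, one_mul]
  field_simp

/-- `B_k(χ) = (1/F)·∑_{1≤j≤k+1} ((−1)^{j−1}/j)·C(k+1,j)·∑_{0≤r<Fj} χ(r)·r^k`. -/
theorem bernoulliChar_eq_alternating_sum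
    (F : ℕ) [NeZero F] (χ : DirichletCharacter ℂ F) (hχ : χ.IsPrimitive)
    (k : ℕ) (hk : 1 ≤ k) (B : ℕ → ℂ) (hB : IsBernoulliChar χ B) :
    B k = (1 / (F : ℂ)) *
      ∑ j ∈ Finset.Icc 1 (k + 1),
        ((-1 : ℂ) ^ (j - 1) / (j : ℂ)) * ((k + 1).choose j : ℂ) *
          ∑ r ∈ Finset.range (F * j), χ (r : ZMod F) * (r : ℂ) ^ k :=
  bernoulliChar_eq_alternating_sum_general F χ k B hB
end

section
/- Let χ be a nontrivial primitive Dirichlet character of conductor F which is odd (χ(−1) = −1). Then for every integer k ≥ 1: Σ_{0≤j≤(k−1)/2} C(k,2j+1)·F^{2j}·B_{2k−1−2j}(χ) = ((−1)^k·k/F)·Σ_{0≤r<F/2} χ(r)·r^{k−1}·(F−r)^{k−1}·(F−2r). -/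
/-!
Pair both sides of the generating function identity with `Q = (X (F - X))^k` under the umbral
pairing `⟨P, f⟩ = ∑ₙ Pₙ n! [Tⁿ] f`: multiplication of `f` by `T` differentiates `P`, and
multiplication by `e^{aT}` shifts `P(X)` to `P(X + a)`. The left side becomes `∑_{r<F} χ(r) Q'(r)`,
which folds onto `2r < F` because `χ` and `Q'` are both odd under `r ↦ F - r`. The right side
becomes `∑ₙ (Q(X + F) - Q(X))ₙ Bₙ`, and `Q(X + F) - Q(X) = (-X)^k ((X + F)^k - (X - F)^k)` only
involves odd powers of `F`.
-/

open scoped Classical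

open Polynomial
open scoped Nat

theorem Finset.sum_range_eq_two_nsmul_sum_range_half {M : Type*} [AddCommMonoid M] {F : ℕ}
    {f : ℕ → M} (h0 : f 0 = 0) (hmid : ∀ r, 2 * r = F → f r = 0)
    (hsymm : ∀ r ≤ F, f (F - r) = f r) :
    ∑ r ∈ range F, f r = 2 • ∑ r ∈ range ((F + 1) / 2), f r := by
  have hupper : ∑ r ∈ Ico ((F + 1) / 2) F, f r = ∑ r ∈ range ((F + 1) / 2), f r :=
    calc ∑ r ∈ Ico ((F + 1) / 2) F, f r
        = ∑ r ∈ Ico ((F + 1) / 2) F, f (F - r) :=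
          sum_congr rfl fun r hr => (hsymm r (mem_Ico.1 hr).2.le).symm
      _ = ∑ r ∈ Ico 1 (F / 2 + 1), f r := by
          rw [sum_Ico_reflect _ _ (Nat.le_succ F)]
          congr 2 <;> omega
      _ = ∑ r ∈ range (F / 2 + 1), f r := by
          rw [range_eq_Ico, sum_eq_sum_Ico_succ_bot (Nat.succ_pos _), h0, zero_add]
      _ = ∑ r ∈ range ((F + 1) / 2), f r := by
          refine (sum_subset (range_subset_range.2 (by omega)) fun r hr hr' => hmid r ?_).symm
          rw [mem_range] at hr hr'
          omega
  rw [← sum_range_add_sum_Ico _ (by omega : (F + 1) / 2 ≤ F), hupper, two_nsmul]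

theorem Finset.sum_range_eq_sum_range_half_odd {M : Type*} [AddCommMonoid M] {g : ℕ → M}
    (hg : ∀ j, g (2 * j) = 0) (n : ℕ) :
    ∑ t ∈ range n, g t = ∑ j ∈ range (n / 2), g (2 * j + 1) := by
  have himage : (range (n / 2)).image (fun j => 2 * j + 1) = (range n).filter Odd := by
    ext t
    simp only [mem_image, mem_range, mem_filter, Nat.odd_iff]
    constructor
    · rintro ⟨j, hj, rfl⟩
      omega
    · exact fun ht => ⟨t / 2, by omega, by omega⟩
  rw [← sum_filter_of_ne (p := Odd), ← himage, sum_image fun i _ j _ h => by omega]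
  intro t _ ht
  by_contra hodd
  rw [Nat.not_odd_iff_even] at hodd
  obtain ⟨j, rfl⟩ := hodd
  exact ht (two_mul j ▸ hg j)

namespace DirichletCharacter

variable {K : Type*} [Field K] [CharZero K] {F : ℕ}

theorem Odd.sum_range_mul_eq_two_mul_sum_range_half {χ : DirichletCharacter K F} (hχ : χ.Odd)
    {g : K → K} (hg : ∀ x, g (F - x) = -g x) :
    ∑ r ∈ Finset.range F, χ r * g r = 2 * ∑ r ∈ Finset.range ((F + 1) / 2), χ r * g r := by
  rw [two_mul, ← two_nsmul]
  refine Finset.sum_range_eq_two_nsmul_sum_range_half ?_ (fun r hr => ?_) (fun r hr => ?_)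
  · have hχ0 : χ 0 = 0 := self_eq_neg.1 (by simpa using Odd.eval_neg χ 0 hχ)
    simp [hχ0]
  · have hgr : g r = -g r := by
      rw [← hg]
      congr
      rw [← hr]
      push_cast
      ring
    simp [self_eq_neg.1 hgr]
  · rw [Nat.cast_sub hr, Nat.cast_sub hr, ZMod.natCast_self, zero_sub, Odd.eval_neg χ _ hχ, hg]
    ring

end DirichletCharacter

theorem sum_choose_mul_pow_sub_neg_pow {R : Type*} [CommRing R] {k : ℕ} (hk : 1 ≤ k) (a : R)
    (b : ℕ → R) :
    ∑ t ∈ Finset.range (k + 1), k.choose t * (a ^ t - (-a) ^ t) * b (2 * k - t) =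
      2 * a * ∑ j ∈ Finset.range ((k - 1) / 2 + 1),
        k.choose (2 * j + 1) * a ^ (2 * j) * b (2 * k - 1 - 2 * j) := by
  rw [Finset.sum_range_eq_sum_range_half_odd fun j => by rw [(even_two_mul j).neg_pow]; ring,
    show (k + 1) / 2 = (k - 1) / 2 + 1 by omega, Finset.mul_sum]
  refine Finset.sum_congr rfl fun j _ => ?_
  rw [(odd_two_mul_add_one j).neg_pow, show 2 * k - (2 * j + 1) = 2 * k - 1 - 2 * j by omega]
  ring

namespace Polynomial

section CommSemiring

variable {R : Type*} [CommSemiring R]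

noncomputable def umbralPairing : R[X] →ₗ[R] PowerSeries R →ₗ[R] R :=
  lsum fun n => LinearMap.toSpanSingleton R _ ((n ! : R) • PowerSeries.coeff n)

@[simp]
theorem umbralPairing_monomial (n : ℕ) (c : R) (f : PowerSeries R) :
    umbralPairing (monomial n c) f = c * n ! * PowerSeries.coeff n f := by
  simp [umbralPairing, mul_assoc]

theorem umbralPairing_X_mul (P : R[X]) (f : PowerSeries R) :
    umbralPairing P (PowerSeries.X * f) = umbralPairing (derivative P) f := by
  induction P using Polynomial.induction_on' with
  | add P Q hP hQ => simp [hP, hQ]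
  | monomial n c =>
    cases n with
    | zero =>
      simp only [umbralPairing_monomial, PowerSeries.coeff_zero_X_mul, derivative_monomial,
        Nat.cast_zero, mul_zero, map_zero, LinearMap.zero_apply]
    | succ n =>
      rw [derivative_monomial, umbralPairing_monomial, umbralPairing_monomial,
        PowerSeries.coeff_succ_X_mul, Nat.factorial_succ]
      push_cast
      ring

end CommSemiring

section Field

variable {K : Type*} [Field K] [CharZero K]

theorem umbralPairing_rescale_exp (P : K[X]) (a : K) :
    umbralPairing P (PowerSeries.rescale a (PowerSeries.exp K)) = P.eval a := by
  induction P using Polynomial.induction_on' with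
  | add P Q hP hQ => simp [hP, hQ]
  | monomial n c =>
    rw [umbralPairing_monomial, PowerSeries.coeff_rescale, PowerSeries.coeff_exp, eval_monomial,
      map_div₀, map_one, map_natCast]
    have : (n ! : K) ≠ 0 := Nat.cast_ne_zero.2 n.factorial_ne_zero
    field_simp

theorem umbralPairing_rescale_exp_mul (P : K[X]) (a : K) (f : PowerSeries K) :
    umbralPairing P (PowerSeries.rescale a (PowerSeries.exp K) * f) =
      umbralPairing (taylor a P) f := by
  induction P using Polynomial.induction_on' with
  | add P Q hP hQ => simp [hP, hQ]
  | monomial n c =>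
    rw [taylor_monomial, add_comm, (Commute.all _ _).add_pow', Finset.mul_sum, map_sum,
      LinearMap.sum_apply, umbralPairing_monomial, PowerSeries.coeff_mul, Finset.mul_sum]
    refine Finset.sum_congr rfl fun p hp => ?_
    obtain ⟨i, j⟩ := p
    rw [Finset.HasAntidiagonal.mem_antidiagonal] at hp
    subst hp
    have hterm : C c * ((i + j).choose i • (C a ^ i * X ^ j)) =
        monomial j (c * (i + j).choose i * a ^ i) := by
      rw [← C_mul_X_pow_eq_monomial, nsmul_eq_mul, ← C_eq_natCast, ← C_pow, C_mul, C_mul]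
      ring
    have hfac : ((i + j).choose i * i ! * j ! : K) = (i + j)! := by
      rw [Nat.choose_symm_add]; exact_mod_cast Nat.add_choose_mul_factorial_mul_factorial i j
    have hi : (i ! : K) ≠ 0 := Nat.cast_ne_zero.2 i.factorial_ne_zero
    rw [hterm, umbralPairing_monomial, PowerSeries.coeff_rescale, PowerSeries.coeff_exp,
      map_div₀, map_one, map_natCast, ← hfac]
    field_simp

theorem umbralPairing_mk_div_factorial (n : ℕ) (c : K) (b : ℕ → K) :
    umbralPairing (monomial n c) (PowerSeries.mk fun m => b m / m !) = c * b n := by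
  rw [umbralPairing_monomial, PowerSeries.coeff_mk]
  have : (n ! : K) ≠ 0 := Nat.cast_ne_zero.2 n.factorial_ne_zero
  field_simp

theorem umbralPairing_X_mul_sum_C_mul_rescale_exp {ι : Type*} (P : K[X]) (s : Finset ι)
    (w x : ι → K) :
    umbralPairing P (PowerSeries.X *
        ∑ r ∈ s, PowerSeries.C (w r) * PowerSeries.rescale (x r) (PowerSeries.exp K)) =
      ∑ r ∈ s, w r * (derivative P).eval (x r) := by
  simp only [umbralPairing_X_mul, ← PowerSeries.smul_eq_C_mul, map_sum, map_smul,
    umbralPairing_rescale_exp, smul_eq_mul]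

theorem umbralPairing_rescale_exp_sub_one_mul (P : K[X]) (a : K) (f : PowerSeries K) :
    umbralPairing P ((PowerSeries.rescale a (PowerSeries.exp K) - 1) * f) =
      umbralPairing (taylor a P - P) f := by
  rw [sub_mul, one_mul, map_sub, umbralPairing_rescale_exp_mul, map_sub, LinearMap.sub_apply]

end Field

section CommRing

variable {R : Type*} [CommRing R]

theorem eval_derivative_X_mul_C_sub_X_pow (a x : R) (k : ℕ) :
    (derivative ((X * (C a - X)) ^ k)).eval x =
      k * x ^ (k - 1) * (a - x) ^ (k - 1) * (a - 2 * x) := by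
  rw [derivative_pow, derivative_mul, derivative_sub, derivative_C, derivative_X]
  simp only [eval_mul, eval_pow, eval_C, eval_add, eval_sub, eval_X, eval_one, eval_zero,
    mul_pow]
  ring

theorem taylor_X_mul_C_sub_X_pow_sub_self (a : R) (k : ℕ) :
    taylor a ((X * (C a - X)) ^ k) - (X * (C a - X)) ^ k =
      ∑ t ∈ Finset.range (k + 1),
        monomial (2 * k - t) ((-1) ^ k * k.choose t * (a ^ t - (-a) ^ t)) := by
  have hfactor : taylor a ((X * (C a - X)) ^ k) - (X * (C a - X)) ^ k =
      (-X) ^ k * ((C a + X) ^ k - (C (-a) + X) ^ k) := by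
    rw [taylor_pow, taylor_mul, map_sub, taylor_X, taylor_C,
      show (X + C a) * (C a - (X + C a)) = -X * (C a + X) by ring,
      show X * (C a - X) = -X * (C (-a) + X) by rw [C_neg]; ring, mul_pow, mul_pow, mul_sub]
  rw [hfactor, add_pow, add_pow, ← Finset.sum_sub_distrib, Finset.mul_sum]
  refine Finset.sum_congr rfl fun t ht => ?_
  rw [← C_mul_X_pow_eq_monomial, show 2 * k - t = k + (k - t) by
    rw [Finset.mem_range] at ht; omega, pow_add, neg_pow]
  simp only [C_mul, C_sub, C_pow, C_neg, C_1, ← C_eq_natCast]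
  ring

end CommRing

end Polynomial

theorem bernoulliChar_recursion_odd_general
    (F : ℕ) [NeZero F] (χ : DirichletCharacter ℂ F) (hχodd : χ (-1) = -1)
    (k : ℕ) (hk : 1 ≤ k) (B : ℕ → ℂ) (hB : IsBernoulliChar χ B) :
    ∑ j ∈ Finset.range ((k - 1) / 2 + 1),
        (k.choose (2 * j + 1) : ℂ) * (F : ℂ) ^ (2 * j) * B (2 * k - 1 - 2 * j)
      = ((-1 : ℂ) ^ k * (k : ℂ) / (F : ℂ)) *
          ∑ r ∈ Finset.range ((F + 1) / 2),
            χ (r : ZMod F) * (r : ℂ) ^ (k - 1) * ((F : ℂ) - (r : ℂ)) ^ (k - 1) *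
              ((F : ℂ) - 2 * (r : ℂ)) := by
  have hF : (F : ℂ) ≠ 0 := Nat.cast_ne_zero.2 (NeZero.ne F)
  set S := ∑ j ∈ Finset.range ((k - 1) / 2 + 1),
    (k.choose (2 * j + 1) : ℂ) * (F : ℂ) ^ (2 * j) * B (2 * k - 1 - 2 * j)
  set T := ∑ r ∈ Finset.range ((F + 1) / 2),
    χ (r : ZMod F) * (r : ℂ) ^ (k - 1) * ((F : ℂ) - (r : ℂ)) ^ (k - 1) * ((F : ℂ) - 2 * (r : ℂ))
    with hT
  have hpair := congrArg (umbralPairing ((X * (C (F : ℂ) - X)) ^ k)) hB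
  have hleft : umbralPairing ((X * (C (F : ℂ) - X)) ^ k) (PowerSeries.X *
      ∑ r ∈ Finset.range F, PowerSeries.C (χ (r : ZMod F)) *
        PowerSeries.rescale (r : ℂ) (PowerSeries.exp ℂ)) = 2 * k * T := by
    have hfold := DirichletCharacter.Odd.sum_range_mul_eq_two_mul_sum_range_half hχodd
      (g := fun x => k * x ^ (k - 1) * (F - x) ^ (k - 1) * (F - 2 * x)) fun x => by ring
    simp only [umbralPairing_X_mul_sum_C_mul_rescale_exp, eval_derivative_X_mul_C_sub_X_pow]
    rw [hfold, mul_assoc, hT, Finset.mul_sum (a := (k : ℂ))]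
    exact congrArg _ (Finset.sum_congr rfl fun r _ => by ring)
  have hright : umbralPairing ((X * (C (F : ℂ) - X)) ^ k)
      ((PowerSeries.rescale (F : ℂ) (PowerSeries.exp ℂ) - 1) *
        PowerSeries.mk fun n => B n / n.factorial) = (-1) ^ k * (2 * F * S) := by
    rw [umbralPairing_rescale_exp_sub_one_mul, taylor_X_mul_C_sub_X_pow_sub_self, map_sum,
      LinearMap.sum_apply, ← sum_choose_mul_pow_sub_neg_pow hk, Finset.mul_sum]
    simp only [umbralPairing_mk_div_factorial]
    exact Finset.sum_congr rfl fun t _ => by ring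
  rw [hleft, hright] at hpair
  have hsign : (-1 : ℂ) ^ k * (-1) ^ k = 1 := by rw [← mul_pow]; norm_num
  rw [div_mul_eq_mul_div, eq_div_iff hF]
  linear_combination (-(-1 : ℂ) ^ k / 2) * hpair - F * S * hsign

/-- for a nontrivial primitive *odd* character `χ` of conductor `F` and `k ≥ 1`,
`∑_{0≤j≤(k−1)/2} C(k,2j+1)·F^{2j}·B_{2k−1−2j}(χ)
  = ((−1)^k·k/F)·∑_{0≤r<F/2} χ(r)·r^{k−1}·(F−r)^{k−1}·(F−2r)`.
(The condition `r < F/2` on natural numbers is `2r < F`, i.e. `r < (F+1)/2`.) -/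
theorem bernoulliChar_recursion_odd
    (F : ℕ) [NeZero F] (χ : DirichletCharacter ℂ F) (hχ : χ.IsPrimitive)
    (hχ1 : χ ≠ 1) (hχodd : χ (-1) = -1)
    (k : ℕ) (hk : 1 ≤ k) (B : ℕ → ℂ) (hB : IsBernoulliChar χ B) :
    ∑ j ∈ Finset.range ((k - 1) / 2 + 1),
        (k.choose (2 * j + 1) : ℂ) * (F : ℂ) ^ (2 * j) * B (2 * k - 1 - 2 * j)
      = ((-1 : ℂ) ^ k * (k : ℂ) / (F : ℂ)) *
          ∑ r ∈ Finset.range ((F + 1) / 2),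
            χ (r : ZMod F) * (r : ℂ) ^ (k - 1) * ((F : ℂ) - (r : ℂ)) ^ (k - 1) *
              ((F : ℂ) - 2 * (r : ℂ)) :=
  bernoulliChar_recursion_odd_general F χ hχodd k hk B hB
end

section
/- Let χ be a primitive Dirichlet character of conductor F and let k ≥ 1 be an integer with χ(−1) = (−1)^k. Then L(χ,1−k) = (2·(k−1)!·F^k / ((−2πi)^k · g(χ̄)))·L(χ̄,k), where g(χ̄) = Σ_{0≤r<F} χ̄(r)·e^{2πir/F} is the Gauss sum of the conjugate character χ̄; moreover |g(χ̄)| = F^{1/2}. -/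
/-! For primitive `χ` of level `N`, the discrete Fourier transform of `χ` is `τ(χ) · χ⁻¹(-·)`,
where `τ` is the Gauss sum. Hence the functional equation for `L`-functions of arbitrary functions
on `ZMod N` relates `L(χ, 1 - s)` to `τ(χ) · L(χ⁻¹, s)`, with the factor
`χ(-1) e^{πis/2} + e^{-πis/2}`, which equals `2 (-i)^k` at `s = k` when `χ(-1) = (-1)^k`.
Fourier inversion at `-1` gives `τ(χ) · τ(χ⁻¹, ψ⁻¹) = N`; since `τ(χ⁻¹, ψ⁻¹)` is the complex
conjugate of `τ(χ)`, this gives `|τ(χ)| = √N`, and it also expresses `τ(χ)` through `g = τ(χ⁻¹)`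
as `χ(-1) N / g`. -/

open Complex ZMod
open scoped Real

lemma MulChar.apply_neg_one_mul_gaussSum_inv {R R' : Type*} [CommRing R] [Fintype R] [CommRing R']
    (χ : MulChar R R') (ψ : AddChar R R') :
    χ (-1) * gaussSum χ ψ⁻¹ = gaussSum χ ψ := by
  rw [ψ.inv_mulShift, ← Units.coe_neg_one]
  exact gaussSum_mulShift χ ψ (-1)

lemma ZMod.LFunction_const_mul {N : ℕ} [NeZero N] (a : ℂ) (Φ : ZMod N → ℂ) (s : ℂ) :
    LFunction (fun j ↦ a * Φ j) s = a * LFunction Φ s := by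
  simp only [LFunction, Finset.mul_sum, mul_assoc, mul_left_comm a]

lemma ZMod.gaussSum_stdAddChar_eq_sum_range {N : ℕ} [NeZero N] (χ : MulChar (ZMod N) ℂ) :
    gaussSum χ stdAddChar = ∑ r ∈ Finset.range N, χ r * exp (2 * π * I * r / N) := by
  refine Finset.sum_nbij' ZMod.val (fun r ↦ (r : ZMod N)) (fun a _ ↦ Finset.mem_range.mpr a.val_lt)
    (fun _ _ ↦ Finset.mem_univ _) (fun a _ ↦ natCast_zmod_val a)
    (fun r hr ↦ val_natCast_of_lt (Finset.mem_range.mp hr)) fun a _ ↦ ?_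
  rw [← toCircle_natCast, natCast_zmod_val, stdAddChar_apply]

lemma MulChar.inv_apply_neg_one {R R' : Type*} [CommRing R] [CommMonoidWithZero R']
    (χ : MulChar R R') : χ⁻¹ (-1) = χ (-1) := by
  rw [inv_apply, ← Units.coe_neg_one, Ring.inverse_unit]
  simp

lemma Complex.exp_pi_mul_I_mul_natCast_div_two (k : ℕ) : cexp (π * I * k / 2) = I ^ k := by
  rw [show π * I * k / 2 = k * (π / 2 * I) by ring, exp_nat_mul, exp_pi_div_two_mul_I]

lemma Complex.exp_neg_pi_mul_I_mul_natCast_div_two (k : ℕ) : cexp (-π * I * k / 2) = (-I) ^ k := by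
  rw [show -π * I * k / 2 = k * (-π / 2 * I) by ring, exp_nat_mul, exp_neg_pi_div_two_mul_I]

namespace DirichletCharacter

lemma IsPrimitive.inv {R : Type*} [CommMonoidWithZero R] {N : ℕ} {χ : DirichletCharacter R N}
    (hχ : χ.IsPrimitive) : χ⁻¹.IsPrimitive :=
  (conductor_inv χ).trans hχ

variable {N : ℕ} [NeZero N] {χ : DirichletCharacter ℂ N}

lemma IsPrimitive.gaussSum_mul_gaussSum_inv_inv (hχ : χ.IsPrimitive) :
    gaussSum χ stdAddChar * gaussSum χ⁻¹ stdAddChar⁻¹ = N := by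
  have h := congrFun (dft_dft (⇑χ)) (-1)
  simp only [dft_apply, hχ.fourierTransform_eq_inv_mul_gaussSum, neg_neg, map_one, smul_eq_mul,
    mul_one, mul_neg] at h
  rw [← h, mul_comm, gaussSum, Finset.sum_mul]
  refine Fintype.sum_equiv (Equiv.neg _) _ _ fun x ↦ ?_
  rw [Equiv.neg_apply, neg_neg, AddChar.inv_apply]
  ring

lemma IsPrimitive.norm_gaussSum (hχ : χ.IsPrimitive) :
    ‖gaussSum χ stdAddChar‖ = √N := by
  have h : gaussSum χ stdAddChar * star (gaussSum χ stdAddChar) = N := by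
    rw [star_gaussSum_eq, hχ.gaussSum_mul_gaussSum_inv_inv]
  rw [Complex.star_def, mul_conj, normSq_eq_norm_sq, ← ofReal_natCast, ofReal_inj] at h
  rw [← h, Real.sqrt_sq (norm_nonneg _)]

lemma IsPrimitive.gaussSum_mul_gaussSum_inv (hχ : χ.IsPrimitive) :
    gaussSum χ stdAddChar * gaussSum χ⁻¹ stdAddChar = χ (-1) * N := by
  rw [← hχ.gaussSum_mul_gaussSum_inv_inv, ← MulChar.apply_neg_one_mul_gaussSum_inv χ⁻¹,
    MulChar.inv_apply_neg_one]
  ring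

lemma IsPrimitive.LFunction_one_sub (hχ : χ.IsPrimitive) {s : ℂ} (hs : ∀ n : ℕ, s ≠ -n)
    (hs' : N ≠ 1 ∨ s ≠ 1) :
    LFunction χ (1 - s) = N ^ (s - 1) * (2 * π) ^ (-s) * Gamma s *
      (χ (-1) * cexp (π * I * s / 2) + cexp (-π * I * s / 2)) * gaussSum χ stdAddChar *
        LFunction χ⁻¹ s := by
  have hdft : 𝓕 χ = fun j ↦ χ (-1) * gaussSum χ stdAddChar * χ⁻¹ j := by
    ext j
    rw [hχ.fourierTransform_eq_inv_mul_gaussSum, ← neg_one_mul j, map_mul,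
      MulChar.inv_apply_neg_one]
    ring
  have hdft_neg : 𝓕 (fun j ↦ χ (-j)) = fun j ↦ gaussSum χ stdAddChar * χ⁻¹ j := by
    ext j
    rw [congrFun (dft_comp_neg χ) j, hχ.fourierTransform_eq_inv_mul_gaussSum, neg_neg, mul_comm]
  rw [LFunction, ZMod.LFunction_one_sub _ hs (hs'.imp_left χ.map_zero'), hdft, hdft_neg,
    ZMod.LFunction_const_mul, ZMod.LFunction_const_mul, ← LFunction]
  ring

lemma IsPrimitive.LFunction_one_sub_natCast (hχ : χ.IsPrimitive) {k : ℕ} (hk : 1 ≤ k)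
    (hpar : χ (-1) = (-1) ^ k) :
    LFunction χ (1 - k) = 2 * (k - 1).factorial * N ^ (k - 1) * gaussSum χ stdAddChar /
      (2 * π * I) ^ k * LFunction χ⁻¹ k := by
  have hs (n : ℕ) : (k : ℂ) ≠ -n := by
    intro h
    have := congrArg re h
    simp only [natCast_re, neg_re] at this
    linarith [(by exact_mod_cast hk : (1 : ℝ) ≤ k), (Nat.cast_nonneg n : (0 : ℝ) ≤ n)]
  have hs' : N ≠ 1 ∨ (k : ℂ) ≠ 1 := by
    rcases eq_or_ne k 1 with rfl | hk1
    · left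
      rintro rfl
      rw [show (-1 : ZMod 1) = 1 from Subsingleton.elim _ _, map_one, pow_one] at hpar
      norm_num at hpar
    · exact .inr (mod_cast hk1)
  have hk' : (k : ℂ) - 1 = (k - 1 : ℕ) := by rw [Nat.cast_sub hk, Nat.cast_one]
  have hfactor : χ (-1) * cexp (π * I * k / 2) + cexp (-π * I * k / 2) = 2 / I ^ k := by
    rw [hpar, exp_pi_mul_I_mul_natCast_div_two, exp_neg_pi_mul_I_mul_natCast_div_two, ← mul_pow,
      neg_one_mul, ← two_mul, div_eq_mul_inv, ← inv_pow, inv_I]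
  have hGamma : Gamma k = (k - 1).factorial := by
    rw [← Complex.Gamma_nat_eq_factorial, ← hk', sub_add_cancel]
  rw [hχ.LFunction_one_sub hs hs', hfactor, hGamma, hk', cpow_natCast, cpow_neg, cpow_natCast]
  ring

end DirichletCharacter

/-- the complete functional equation in the form
`L(χ,1−k) = (2·(k−1)!·F^k / ((−2πi)^k · g(χ̄)))·L(χ̄,k)`, where
`g(χ̄) = ∑_{0≤r<F} χ̄(r)·e^{2πir/F}` is the Gauss sum of the conjugate character `χ̄`;
moreover `|g(χ̄)| = F^{1/2}`. -/
theorem LFunction_one_sub_eq_functional_equation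
    (F : ℕ) [NeZero F] (χ : DirichletCharacter ℂ F) (hχ : χ.IsPrimitive)
    (k : ℕ) (hk : 1 ≤ k) (hpar : χ (-1) = (-1) ^ k)
    (χbar : DirichletCharacter ℂ F) (hχbar : χbar = χ.ringHomComp (starRingEnd ℂ))
    (g : ℂ)
    (hg : g = ∑ r ∈ Finset.range F,
        χbar (r : ZMod F) * Complex.exp (2 * Real.pi * Complex.I * r / F)) :
    χ.LFunction (1 - (k : ℂ)) =
        (2 * (k - 1).factorial * (F : ℂ) ^ k / ((-(2 * Real.pi * Complex.I)) ^ k * g)) *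
          χbar.LFunction (k : ℂ)
      ∧ ‖g‖ = Real.sqrt F := by
  have hχbar_inv : χbar = χ⁻¹ := hχbar.trans (MulChar.star_eq_inv χ)
  rw [← gaussSum_stdAddChar_eq_sum_range] at hg
  subst hχbar_inv hg
  have hnorm : ‖gaussSum χ⁻¹ stdAddChar‖ = √F := hχ.inv.norm_gaussSum
  refine ⟨?_, hnorm⟩
  have hg0 : gaussSum χ⁻¹ stdAddChar ≠ 0 := by
    rw [← norm_ne_zero_iff, hnorm, Real.sqrt_ne_zero']
    exact_mod_cast NeZero.pos F
  have hτ : gaussSum χ stdAddChar = (-1) ^ k * F / gaussSum χ⁻¹ stdAddChar := by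
    rw [eq_div_iff hg0, hχ.gaussSum_mul_gaussSum_inv, hpar]
  have hsign : ((-1 : ℂ) ^ k) ^ 2 = 1 := by rw [← pow_mul, pow_mul', neg_one_sq, one_pow]
  rw [hχ.LFunction_one_sub_natCast hk hpar, hτ, ← pow_sub_one_mul (by omega : k ≠ 0) (F : ℂ)]
  field_simp
  rw [neg_pow (2 * π * I)]
  linear_combination ((k - 1).factorial * F ^ (k - 1) * F * (2 * π * I) ^ k * (χ⁻¹).LFunction k) * hsign
end
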